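/- arXiv:1104.3390 — 4 statements merged into one kernel-verified Lean document; each statement's English description precedes it below -/
import Mathlib

section
/- Let S ≥ 1 and define μ_L = 1/(2S-1) and μ_FL = min{ 1/(2(1-q_2)S - 1), 1/((2-q_1)S) }, where q_1, q_2 ∈ [0,1] are the fractions of large and small coefficients among the S nonzero coefficients (so q_1 S and q_2 S are nonnegative integers with q_1 S + q_2 S ≤ S, q_1 S ≥ 1, q_2 S ≥ 1). If q_1 S > 1 then μ_FL > μ_L. -/
/-! Both thresholds in `μ_FL` shrink the denominator `2S - 1` of `μ_L` while keeping it positive: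
`2(1 - q₂)S - 1 = 2S - 2k₂ - 1` drops by `2k₂ ≥ 2` and stays `≥ 2k₁ - 1 > 0`, and
`(2 - q₁)S = 2S - k₁` drops by `k₁ - 1 ≥ 1` (as `k₁ = q₁S > 1`) and stays `≥ S > 0`. -/

theorem one_div_two_mul_sub_one_lt_min {K : Type*} [Field K] [LinearOrder K]
    [IsStrictOrderedRing K] {a b s : K} (ha : 2 ≤ a) (hb : 1 ≤ b) (hab : a + b ≤ s) :
    1 / (2 * s - 1) < min (1 / (2 * s - 2 * b - 1)) (1 / (2 * s - a)) :=
  lt_min (one_div_lt_one_div_of_lt (by linarith) (by linarith))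
    (one_div_lt_one_div_of_lt (by linarith) (by linarith))

theorem muFL_gt_muL_general (S k₁ k₂ : ℕ)
    (q₁ q₂ : ℝ) (hq₁ : q₁ = (k₁ : ℝ) / S) (hq₂ : q₂ = (k₂ : ℝ) / S)
    (hk₂ : 1 ≤ k₂) (hsum : k₁ + k₂ ≤ S)
    (hbig : q₁ * S > 1) :
    min (1 / (2 * (1 - q₂) * S - 1)) (1 / ((2 - q₁) * S))
      > 1 / (2 * S - 1) := by
  have hS : (S : ℝ) ≠ 0 := by
    rintro hS
    simp only [hS, mul_zero] at hbig
    exact absurd hbig (by norm_num)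
  have hk₁ : (2 : ℝ) ≤ k₁ := by
    have : (1 : ℝ) < k₁ := by rwa [hq₁, div_mul_cancel₀ _ hS] at hbig
    exact_mod_cast (show 1 < k₁ by exact_mod_cast this)
  have hμ₁ : 2 * (1 - q₂) * S - 1 = 2 * S - 2 * k₂ - 1 := by rw [hq₂]; field_simp
  have hμ₂ : (2 - q₁) * S = 2 * S - k₁ := by rw [hq₁]; field_simp
  rw [hμ₁, hμ₂]
  exact one_div_two_mul_sub_one_lt_min hk₁ (by exact_mod_cast hk₂) (by exact_mod_cast hsum)

/-- With `μ_L = 1/(2S-1)` and `μ_FL = min{1/(2(1-q₂)S - 1), 1/((2-q₁)S)}`,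
where `q₁ = k₁/S` and `q₂ = k₂/S` are the fractions of large and small
coefficients (`k₁, k₂ ≥ 1`, `k₁ + k₂ ≤ S`), if `q₁ S > 1` then `μ_FL > μ_L`. -/
theorem muFL_gt_muL (S k₁ k₂ : ℕ) (hS : 1 ≤ S)
    (q₁ q₂ : ℝ) (hq₁ : q₁ = (k₁ : ℝ) / S) (hq₂ : q₂ = (k₂ : ℝ) / S)
    (hk₁ : 1 ≤ k₁) (hk₂ : 1 ≤ k₂) (hsum : k₁ + k₂ ≤ S)
    (hbig : q₁ * S > 1) :
    min (1 / (2 * (1 - q₂) * S - 1)) (1 / ((2 - q₁) * S))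
      > 1 / (2 * S - 1) :=
  muFL_gt_muL_general S k₁ k₂ q₁ q₂ hq₁ hq₂ hk₂ hsum hbig
end

section
/- Let S ≥ 1 and q_1, q_2 ∈ (0,1] with q_1 + q_2 ≤ 1. Then μ_FL = min{ 1/(2(1-q_2)S - 1), 1/((2-q_1)S) } ≥ μ_L = 1/(2S-1), with equality only if q_1 S ≤ 1 forces the second term to dominate; in particular, 1/(2(1-q_2)S - 1) > 1/(2S-1) whenever q_2 > 0 and 2(1-q_2)S - 1 > 0. -/
/-- For `S ≥ 1` and `q₁, q₂ ∈ (0,1]` with `q₁ + q₂ ≤ 1`: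
if `q₁ S ≥ 1` then `μ_FL = min{1/(2(1-q₂)S-1), 1/((2-q₁)S)} ≥ μ_L = 1/(2S-1)`;
equality `μ_FL = μ_L` can only occur when `q₁ S ≤ 1`; and in particular
`1/(2(1-q₂)S-1) > 1/(2S-1)` whenever `q₂ > 0` and `2(1-q₂)S - 1 > 0`. -/
theorem muFL_ge_muL (S : ℕ) (hS : 1 ≤ S)
    (q₁ q₂ : ℝ) (hq₁ : 0 < q₁) (hq₁' : q₁ ≤ 1) (hq₂ : 0 < q₂) (hq₂' : q₂ ≤ 1)
    (hsum : q₁ + q₂ ≤ 1) :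
    ((1 : ℝ) ≤ q₁ * S →
      min (1 / (2 * (1 - q₂) * S - 1)) (1 / ((2 - q₁) * S)) ≥ 1 / (2 * S - 1)) ∧
    (min (1 / (2 * (1 - q₂) * S - 1)) (1 / ((2 - q₁) * S)) = 1 / (2 * S - 1) →
      q₁ * S ≤ 1) ∧
    (0 < 2 * (1 - q₂) * S - 1 →
      1 / (2 * (1 - q₂) * S - 1) > 1 / (2 * S - 1)) := by
  have hs : (1:ℝ) ≤ (S:ℝ) := by exact_mod_cast hS
  have h2 : (0:ℝ) < 2 * S - 1 := by linarith
  refine ⟨?_, ?_, ?_⟩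
  · intro h
    have hA : (0:ℝ) < 2 * (1 - q₂) * S - 1 := by nlinarith
    have hB : (0:ℝ) < (2 - q₁) * S := by nlinarith
    apply le_min
    · apply one_div_le_one_div_of_le hA
      nlinarith
    · apply one_div_le_one_div_of_le hB
      nlinarith
  · intro heq
    by_contra hc
    push_neg at hc
    have hA : (0:ℝ) < 2 * (1 - q₂) * S - 1 := by nlinarith
    have hB : (0:ℝ) < (2 - q₁) * S := by nlinarith
    have h1 : 1 / (2 * S - 1) < 1 / (2 * (1 - q₂) * S - 1) := by
      apply one_div_lt_one_div_of_lt hA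
      nlinarith
    have h2' : 1 / (2 * S - 1) < 1 / ((2 - q₁) * S) := by
      apply one_div_lt_one_div_of_lt hB
      nlinarith
    have := lt_min h1 h2'
    linarith [heq ▸ this]
  · intro hA
    apply one_div_lt_one_div_of_lt hA
    nlinarith
end

section
/- In the setup of Claim 1, suppose all pairwise correlations among the predictors indexed by K ∪ {j} equal -ρ with ρ ≥ 1/(2S-1), sign(β_K) = (-1,...,-1), and C has unit diagonal with all other off-diagonal entries zero. Then, with C_{KK} = (1+ρ)I_S - ρ J_S and C_{jK} = -ρ 1_S^T, the irrepresentability quantity satisfies |C_{jK}(C_{KK})^{-1} sign(β_K)| = ρS/(1 - ρ(S-1)) ≥ 1. -/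
open Matrix

/-- Claim 1 computation: with `C_{KK} = (1+ρ)I_S - ρJ_S` (unit diagonal,
off-diagonal entries `-ρ`), `C_{jK} = -ρ 1_Sᵀ` and `sign(β_K) = -1_S`,
if `1/(2S-1) ≤ ρ` and `ρ(S-1) < 1`, the irrepresentability quantity satisfies
`|C_{jK} (C_{KK})⁻¹ sign(β_K)| = ρS/(1 - ρ(S-1)) ≥ 1`. -/
theorem claim_one_irrepresentability_fails (S : ℕ) (hS : 1 ≤ S) (ρ : ℝ)
    (hρ₁ : 1 / (2 * (S : ℝ) - 1) ≤ ρ) (hρ₂ : ρ * ((S : ℝ) - 1) < 1)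
    (CKK : Matrix (Fin S) (Fin S) ℝ)
    (hCKK : CKK = (1 + ρ) • (1 : Matrix (Fin S) (Fin S) ℝ)
        - ρ • Matrix.of (fun _ _ => (1 : ℝ)))
    (CjK : Fin S → ℝ) (hCjK : CjK = fun _ => -ρ) :
    |CjK ⬝ᵥ CKK⁻¹.mulVec (fun _ => (-1 : ℝ))|
        = ρ * S / (1 - ρ * ((S : ℝ) - 1)) ∧
      1 ≤ |CjK ⬝ᵥ CKK⁻¹.mulVec (fun _ => (-1 : ℝ))| := by
  have hS' : (1:ℝ) ≤ (S:ℝ) := by exact_mod_cast hS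
  have h2 : (0:ℝ) < 2*(S:ℝ) - 1 := by linarith
  have hρpos : 0 < ρ := lt_of_lt_of_le (by positivity) hρ₁
  have hd : 0 < 1 - ρ*((S:ℝ)-1) := by linarith
  set d : ℝ := 1 - ρ*((S:ℝ)-1) with hddef
  have h1ρ : (0:ℝ) < 1+ρ := by linarith
  set a : ℝ := 1/(1+ρ) with hadef
  set b : ℝ := ρ/((1+ρ)*d) with hbdef
  set B : Matrix (Fin S) (Fin S) ℝ :=
    Matrix.of (fun i k => (if i = k then a else 0) + b) with hBdef
  have hinv : CKK⁻¹ = B := by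
    apply Matrix.inv_eq_right_inv
    subst hCKK
    ext i k
    simp only [Matrix.mul_apply, Matrix.sub_apply, Matrix.smul_apply, Matrix.one_apply,
      Matrix.of_apply, smul_eq_mul, hBdef, mul_one]
    have hsum : ∀ l : Fin S,
        ((1 + ρ) * (if i = l then 1 else 0) - ρ) * ((if l = k then a else 0) + b)
        = (1+ρ)*a*((if i = l then (1:ℝ) else 0)*(if l = k then (1:ℝ) else 0))
          + (1+ρ)*b*(if i = l then (1:ℝ) else 0)
          - ρ*a*(if l = k then (1:ℝ) else 0) - ρ*b := by
      intro l
      rcases eq_or_ne i l with h1 | h1 <;> [skip; skip] <;> rcases eq_or_ne l k with h2 | h2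
      · subst h1; subst h2; simp; ring
      · subst h1; simp [h2]; try ring
      · subst h2; simp [h1]; try ring
      · simp [h1, h2]; try ring
    rw [Finset.sum_congr rfl (fun l _ => hsum l)]
    have hik : ∑ l : Fin S, ((if i = l then (1:ℝ) else 0)*(if l = k then (1:ℝ) else 0))
        = if i = k then (1:ℝ) else 0 := by
      simp [ite_and]
    simp only [Finset.sum_sub_distrib, Finset.sum_add_distrib, ← Finset.mul_sum, hik,
      Finset.sum_ite_eq, Finset.sum_ite_eq', Finset.mem_univ, if_true, Finset.sum_const, Finset.card_univ,
      Fintype.card_fin, nsmul_eq_mul, Matrix.one_apply]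
    have hane : (1:ℝ)+ρ ≠ 0 := ne_of_gt h1ρ
    have hdne : d ≠ 0 := ne_of_gt hd
    by_cases h : i = k <;> simp only [h, if_true, if_false] <;>
      simp only [hadef, hbdef] <;> field_simp <;> rw [hddef] <;> ring
  have hvec : CKK⁻¹.mulVec (fun _ => (-1:ℝ)) = fun _ => -(a + S*b) := by
    rw [hinv]
    funext i
    simp only [Matrix.mulVec, dotProduct, hBdef, Matrix.of_apply, mul_neg, mul_one,
      Finset.sum_neg_distrib]
    rw [Finset.sum_add_distrib]
    simp [Finset.sum_ite_eq, Finset.sum_const, Finset.card_univ, mul_comm]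
  have hval : CjK ⬝ᵥ CKK⁻¹.mulVec (fun _ => (-1:ℝ)) = ρ * S * (a + S*b) := by
    rw [hvec, hCjK]
    simp [dotProduct, Finset.sum_const, Finset.card_univ, Fintype.card_fin]
    ring
  have hab : a + S*b = 1/d := by
    have hane : (1:ℝ)+ρ ≠ 0 := ne_of_gt h1ρ
    have hdne : d ≠ 0 := ne_of_gt hd
    rw [hadef, hbdef]
    field_simp
    rw [hddef]; ring_nf
    try tauto
    try exact Or.inl trivial
  have hq : CjK ⬝ᵥ CKK⁻¹.mulVec (fun _ => (-1:ℝ)) = ρ * S / d := by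
    rw [hval, hab]; ring
  have hpos : 0 ≤ ρ * (S:ℝ) / d := by positivity
  have habs : |CjK ⬝ᵥ CKK⁻¹.mulVec (fun _ => (-1:ℝ))| = ρ * S / d := by
    rw [hq, abs_of_nonneg hpos]
  refine ⟨habs, ?_⟩
  rw [habs, le_div_iff₀ hd]
  rw [div_le_iff₀ h2] at hρ₁
  rw [hddef]; nlinarith
end

section
/- With C_{KK} = (1+ρ)I_S - ρJ_S (unit diagonal, off-diagonal entries -ρ, 0 ≤ ρ < 1/(S-1)) and C_{jK} = -ρ 1_S^T, the scalar C_{jK}(C_{KK})^{-1}(-1_S) = ρS/(1 + ρ - ρS), and this quantity is ≥ 1 if and only if ρ ≥ 1/(2S-1). -/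
/-!
The all-ones vector is an eigenvector of `C_KK = (1+ρ)I - ρJ` with eigenvalue `1 + ρ - ρS`,
so `C_KK⁻¹` scales it by `(1 + ρ - ρS)⁻¹` and the quantity is `ρS / (1 + ρ - ρS)`.
`C_KK` is invertible by Gershgorin: its diagonal is `1` and its off-diagonal row sums are
`ρ(S - 1) < 1`. The threshold then comes from `1 + ρ - ρS ≤ ρS ↔ 1 ≤ ρ(2S - 1)`.
-/

open Matrix

section

variable {n : Type*} [Fintype n] [DecidableEq n]

theorem inv_mulVec_eq_inv_smul_of_mulVec_eq_smul {K : Type*} [Field K]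
    {A : Matrix n n K} (hA : A.det ≠ 0) {c : K} (hc : c ≠ 0) {v : n → K} (h : A *ᵥ v = c • v) :
    A⁻¹ *ᵥ v = c⁻¹ • v := by
  have := A.invertibleOfIsUnitDet (isUnit_iff_ne_zero.mpr hA)
  exact inv_mulVec_eq_vec (by rw [mulVec_smul, h, smul_smul, inv_mul_cancel₀ hc, one_smul])

theorem smul_one_sub_smul_allOnes_mulVec_const {α : Type*} [CommRing α] (a b x : α) :
    (a • (1 : Matrix n n α) - b • of fun _ _ => 1) *ᵥ (fun _ => x) =
      (a - b * Fintype.card n) • fun _ => x := by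
  ext i
  simp only [sub_mulVec, smul_mulVec, one_mulVec, Pi.sub_apply, Pi.smul_apply, smul_eq_mul]
  simp [mulVec, dotProduct]
  ring

theorem det_smul_one_sub_smul_allOnes_ne_zero {K : Type*} [NormedField K] (a b : K)
    (h : ‖b‖ * (Fintype.card n - 1) < ‖a - b‖) :
    (a • (1 : Matrix n n K) - b • of fun _ _ => 1).det ≠ 0 := by
  refine det_ne_zero_of_sum_row_lt_diag fun k => ?_
  have hoff : ∀ j ∈ Finset.univ.erase k,
      ‖(a • 1 - b • of fun _ _ => 1 : Matrix n n K) k j‖ = ‖b‖ := by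
    intro j hj
    simp [one_apply_ne' (Finset.ne_of_mem_erase hj)]
  rw [Finset.sum_congr rfl hoff, Finset.sum_const, Finset.card_erase_of_mem (Finset.mem_univ k),
    Finset.card_univ, nsmul_eq_mul, Nat.cast_pred (Fintype.card_pos_iff.mpr ⟨k⟩)]
  simpa [mul_comm] using h

end

theorem one_le_mul_div_one_add_sub_mul_iff (ρ s : ℝ) (hs : 1 / 2 < s) (hd : 0 < 1 + ρ - ρ * s) :
    1 ≤ ρ * s / (1 + ρ - ρ * s) ↔ 1 / (2 * s - 1) ≤ ρ := by
  rw [one_le_div hd, div_le_iff₀ (by linarith)]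
  constructor <;> intro <;> linarith

/-- Tightness of the Lasso bound `μ_L = 1/(2S-1)`: with
`C_{KK} = (1+ρ)I_S - ρJ_S` (`0 ≤ ρ`, `ρ(S-1) < 1`) and `C_{jK} = -ρ 1_Sᵀ`,
the quantity `C_{jK}(C_{KK})⁻¹(-1_S)` equals `ρS/(1+ρ-ρS)`, and it is `≥ 1`
iff `ρ ≥ 1/(2S-1)`. -/
theorem lasso_bound_tight (S : ℕ) (hS : 1 ≤ S) (ρ : ℝ)
    (hρ0 : 0 ≤ ρ) (hρ : ρ * ((S : ℝ) - 1) < 1)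
    (CKK : Matrix (Fin S) (Fin S) ℝ)
    (hCKK : CKK = (1 + ρ) • (1 : Matrix (Fin S) (Fin S) ℝ)
        - ρ • Matrix.of (fun _ _ => (1 : ℝ)))
    (CjK : Fin S → ℝ) (hCjK : CjK = fun _ => -ρ) :
    CjK ⬝ᵥ CKK⁻¹.mulVec (fun _ => (-1 : ℝ)) = ρ * S / (1 + ρ - ρ * S) ∧
      (1 ≤ CjK ⬝ᵥ CKK⁻¹.mulVec (fun _ => (-1 : ℝ)) ↔
        1 / (2 * (S : ℝ) - 1) ≤ ρ) := by
  have hd : 0 < 1 + ρ - ρ * S := by linarith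
  have hdet : CKK.det ≠ 0 := by
    rw [hCKK]
    refine det_smul_one_sub_smul_allOnes_ne_zero _ _ ?_
    simpa [abs_of_nonneg hρ0] using hρ
  have hinv : CKK⁻¹ *ᵥ (fun _ => (-1 : ℝ)) = (1 + ρ - ρ * S)⁻¹ • fun _ => -1 := by
    refine inv_mulVec_eq_inv_smul_of_mulVec_eq_smul hdet hd.ne' ?_
    rw [hCKK, smul_one_sub_smul_allOnes_mulVec_const, Fintype.card_fin]
  have hvalue : CjK ⬝ᵥ CKK⁻¹ *ᵥ (fun _ => (-1 : ℝ)) = ρ * S / (1 + ρ - ρ * S) := by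
    rw [hinv, hCjK, dotProduct_smul]
    simp [dotProduct]
    ring
  refine ⟨hvalue, ?_⟩
  rw [hvalue]
  exact one_le_mul_div_one_add_sub_mul_iff ρ S (by linarith [(Nat.one_le_cast (α := ℝ)).mpr hS]) hd
end
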